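/- arXiv:2210.00914 — 8 statements merged into one kernel-verified Lean document; each statement's English description precedes it below -/
import Mathlib

section
/- Let P be a probability mass function on a finite set of real numbers S that is closed under negation, satisfying the detailed fluctuation theorem P(-σ) = e^{-σ} P(σ) for all σ ∈ S. Then the expectation of tanh(σ/2)² under P equals the expectation of tanh(σ/2) under P, i.e., ⟨tanh(Σ/2)²⟩ = ⟨tanh(Σ/2)⟩. -/
/-! Under the detailed fluctuation theorem the weighted summand `(tanh² (σ/2) - tanh (σ/2)) P σ` is
odd in `σ`, because `e^{-σ} (1 + tanh (σ/2)) = 1 - tanh (σ/2)`; its sum over the symmetric support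
therefore vanishes. -/

open Real

theorem Finset.sum_eq_zero_of_odd_on {α β : Type*} [InvolutiveNeg α] [AddCommGroup β]
    [IsAddTorsionFree β] {s : Finset α} (hs : ∀ x ∈ s, -x ∈ s) {f : α → β}
    (hf : ∀ x ∈ s, f (-x) = -f x) : ∑ x ∈ s, f x = 0 := by
  have h_reindex : ∑ x ∈ s, f (-x) = ∑ x ∈ s, f x :=
    Finset.sum_nbij' Neg.neg Neg.neg hs hs (by simp) (by simp) (by simp)
  rw [← neg_eq_self, ← Finset.sum_neg_distrib, ← h_reindex]
  exact Finset.sum_congr rfl fun x hx => (hf x hx).symm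

theorem Real.exp_neg_mul_one_add_tanh_half (x : ℝ) :
    exp (-x) * (1 + tanh (x / 2)) = 1 - tanh (x / 2) := by
  have hc : cosh (x / 2) ≠ 0 := (cosh_pos _).ne'
  rw [tanh_eq_sinh_div_cosh]
  field_simp
  rw [cosh_add_sinh, cosh_sub_sinh, ← exp_add]
  ring_nf

theorem tanh_half_sq_mul_sub_tanh_half_mul_neg {P : ℝ → ℝ} {x : ℝ}
    (hDFT : P (-x) = exp (-x) * P x) :
    tanh (-x / 2) ^ 2 * P (-x) - tanh (-x / 2) * P (-x)
      = -(tanh (x / 2) ^ 2 * P x - tanh (x / 2) * P x) := by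
  rw [neg_div, tanh_neg, hDFT]
  linear_combination P x * tanh (x / 2) * exp_neg_mul_one_add_tanh_half x

theorem tut_tanh_identity_general (S : Finset ℝ) (hSym : ∀ σ ∈ S, -σ ∈ S)
    (P : ℝ → ℝ)
    (hDFT : ∀ σ ∈ S, P (-σ) = Real.exp (-σ) * P σ) :
    ∑ σ ∈ S, (Real.tanh (σ / 2)) ^ 2 * P σ = ∑ σ ∈ S, Real.tanh (σ / 2) * P σ := by
  rw [← sub_eq_zero, ← Finset.sum_sub_distrib]
  exact Finset.sum_eq_zero_of_odd_on hSym fun σ hσ =>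
    tanh_half_sq_mul_sub_tanh_half_mul_neg (hDFT σ hσ)

theorem tut_tanh_identity (S : Finset ℝ) (hSym : ∀ σ ∈ S, -σ ∈ S)
    (P : ℝ → ℝ) (hP : ∀ σ ∈ S, 0 ≤ P σ) (hsum : ∑ σ ∈ S, P σ = 1)
    (hDFT : ∀ σ ∈ S, P (-σ) = Real.exp (-σ) * P σ) :
    ∑ σ ∈ S, (Real.tanh (σ / 2)) ^ 2 * P σ = ∑ σ ∈ S, Real.tanh (σ / 2) * P σ :=
  tut_tanh_identity_general S hSym P hDFT
end

section
/- Under the fluctuation symmetry P(-σ) = e^{-σ}P(σ) on a finite symmetric set S, the expectation of Σ is nonnegative: ∑_{σ∈S} σ P(σ) ≥ 0 (the Second Law). -/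
/-!
Pairing `σ` with `-σ`, the fluctuation symmetry turns `σ P(σ) + (-σ) P(-σ)` into
`σ (1 - e^{-σ}) P(σ)`, which is nonnegative because `σ` and `1 - e^{-σ}` have the same sign.
-/

open Real

theorem Finset.sum_comp_neg_of_neg_mem {α M : Type*} [InvolutiveNeg α] [AddCommMonoid M]
    {s : Finset α} (hs : ∀ a ∈ s, -a ∈ s) (f : α → M) :
    ∑ a ∈ s, f (-a) = ∑ a ∈ s, f a :=
  Finset.sum_equiv (Equiv.neg α) (fun a => ⟨hs a, fun h => by simpa using hs _ h⟩)
    (fun _ _ => rfl)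

theorem Finset.sum_nonneg_of_add_comp_neg_nonneg {α M : Type*} [InvolutiveNeg α]
    [AddCommMonoid M] [LinearOrder M] [IsOrderedCancelAddMonoid M]
    {s : Finset α} (hs : ∀ a ∈ s, -a ∈ s) {f : α → M} (hf : ∀ a ∈ s, 0 ≤ f a + f (-a)) :
    0 ≤ ∑ a ∈ s, f a := by
  have hdouble : 0 ≤ ∑ a ∈ s, f a + ∑ a ∈ s, f a := by
    calc 0 ≤ ∑ a ∈ s, (f a + f (-a)) := Finset.sum_nonneg hf
      _ = ∑ a ∈ s, f a + ∑ a ∈ s, f a := by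
        rw [Finset.sum_add_distrib, Finset.sum_comp_neg_of_neg_mem hs]
  by_contra! hneg
  exact (add_neg hneg hneg).not_ge hdouble

theorem Real.mul_one_sub_exp_neg_nonneg (x : ℝ) : 0 ≤ x * (1 - exp (-x)) := by
  rcases le_total 0 x with hx | hx
  · exact mul_nonneg hx (sub_nonneg.mpr (exp_le_one_iff.mpr (neg_nonpos.mpr hx)))
  · exact mul_nonneg_of_nonpos_of_nonpos hx
      (sub_nonpos.mpr (one_le_exp (neg_nonneg.mpr hx)))

theorem second_law (S : Finset ℝ) (hSym : ∀ σ ∈ S, -σ ∈ S)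
    (P : ℝ → ℝ) (hP : ∀ σ ∈ S, 0 ≤ P σ)
    (hDFT : ∀ σ ∈ S, P (-σ) = Real.exp (-σ) * P σ) :
    0 ≤ ∑ σ ∈ S, σ * P σ := by
  refine Finset.sum_nonneg_of_add_comp_neg_nonneg hSym fun σ hσ => ?_
  have hpair : σ * P σ + -σ * P (-σ) = σ * (1 - exp (-σ)) * P σ := by
    rw [hDFT σ hσ]
    ring
  rw [hpair]
  exact mul_nonneg (mul_one_sub_exp_neg_nonneg σ) (hP σ hσ)
end

section
/- Let P satisfy P(-σ) = e^{-σ}P(σ) on a finite symmetric set S and suppose ⟨tanh(Σ/2)⟩ > 0. For any odd function j : ℝ → ℝ (a current) with ⟨j(Σ)⟩ ≠ 0, the scaled variance satisfies ⟨j²⟩/⟨j⟩² − 1 ≥ 1/⟨tanh(Σ/2)⟩ − 1, where all expectations are with respect to P. -/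
/-!
Write `μ(σ) = P(σ) + P(-σ)`. The fluctuation theorem gives `tanh(σ/2) μ(σ) = P(σ) - P(-σ)`,
so averages of odd observables can be rewritten against the symmetric weight `μ`:
`2⟨j⟩ = Σ j tanh(σ/2) μ`, `2⟨j²⟩ = Σ j² μ` and `2⟨tanh(Σ/2)⟩ = Σ tanh²(σ/2) μ`.
Cauchy–Schwarz for the weight `μ` then yields `⟨j⟩² ≤ ⟨j²⟩ ⟨tanh(Σ/2)⟩`, which is the bound.
-/

open Finset Real

section NegClosed

variable {α R : Type*} [InvolutiveNeg α] {S : Finset α}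

theorem Finset.sum_comp_neg_of_neg_mem_s4 [AddCommMonoid R] (hS : ∀ x ∈ S, -x ∈ S) (f : α → R) :
    ∑ x ∈ S, f (-x) = ∑ x ∈ S, f x :=
  sum_nbij' Neg.neg Neg.neg hS hS (fun x _ => neg_neg x) (fun x _ => neg_neg x) fun _ _ => rfl

theorem Finset.two_mul_sum_mul_of_odd [CommRing R] (hS : ∀ x ∈ S, -x ∈ S) {f g : α → R}
    (hf : ∀ x, f (-x) = -f x) :
    2 * ∑ x ∈ S, f x * g x = ∑ x ∈ S, f x * (g x - g (-x)) := by
  have hreflect : ∑ x ∈ S, f x * g (-x) = -∑ x ∈ S, f x * g x := by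
    rw [← sum_comp_neg_of_neg_mem_s4 hS (fun x => f x * g (-x))]
    simp only [neg_neg, hf, neg_mul, sum_neg_distrib]
  simp only [mul_sub, sum_sub_distrib, hreflect]
  ring

theorem Finset.two_mul_sum_mul_of_even [CommRing R] (hS : ∀ x ∈ S, -x ∈ S) {f g : α → R}
    (hf : ∀ x, f (-x) = f x) :
    2 * ∑ x ∈ S, f x * g x = ∑ x ∈ S, f x * (g x + g (-x)) := by
  have hreflect : ∑ x ∈ S, f x * g (-x) = ∑ x ∈ S, f x * g x := by
    rw [← sum_comp_neg_of_neg_mem_s4 hS (fun x => f x * g (-x))]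
    simp only [neg_neg, hf]
  simp only [mul_add, sum_add_distrib, hreflect]
  ring

end NegClosed

theorem Real.tanh_half_mul_one_add_exp_neg (x : ℝ) :
    tanh (x / 2) * (1 + exp (-x)) = 1 - exp (-x) := by
  have hsq : exp (-x) = exp (-(x / 2)) * exp (-(x / 2)) := by rw [← exp_add]; ring_nf
  have hinv : exp (x / 2) * exp (-(x / 2)) = 1 := by rw [← exp_add]; simp
  rw [tanh_eq, hsq]
  field_simp
  linear_combination 2 * exp (-(x / 2)) * hinv

theorem tanh_half_mul_add_eq_sub_of_eq_exp_neg_mul {x p q : ℝ} (h : q = exp (-x) * p) :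
    tanh (x / 2) * (p + q) = p - q := by
  subst h
  linear_combination p * tanh_half_mul_one_add_exp_neg x

theorem sq_sum_odd_mul_le_sum_sq_mul_mul_sum_tanh_half_mul {S : Finset ℝ}
    (hS : ∀ σ ∈ S, -σ ∈ S) {P : ℝ → ℝ} (hP : ∀ σ ∈ S, 0 ≤ P σ)
    (hDFT : ∀ σ ∈ S, P (-σ) = exp (-σ) * P σ) {j : ℝ → ℝ} (hj : ∀ σ, j (-σ) = -j σ) :
    (∑ σ ∈ S, j σ * P σ) ^ 2 ≤ (∑ σ ∈ S, j σ ^ 2 * P σ) * ∑ σ ∈ S, tanh (σ / 2) * P σ := by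
  set μ : ℝ → ℝ := fun σ => P σ + P (-σ)
  have hμ : ∀ σ ∈ S, 0 ≤ μ σ := fun σ hσ => add_nonneg (hP σ hσ) (hP (-σ) (hS σ hσ))
  have htanh : ∀ σ ∈ S, tanh (σ / 2) * μ σ = P σ - P (-σ) := fun σ hσ =>
    tanh_half_mul_add_eq_sub_of_eq_exp_neg_mul (hDFT σ hσ)
  have htanh_odd : ∀ σ : ℝ, tanh (-σ / 2) = -tanh (σ / 2) := fun σ => by
    rw [neg_div, tanh_neg]
  have hJ : 2 * ∑ σ ∈ S, j σ * P σ = ∑ σ ∈ S, j σ * tanh (σ / 2) * μ σ := by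
    rw [two_mul_sum_mul_of_odd hS hj]
    exact sum_congr rfl fun σ hσ => by rw [mul_assoc, htanh σ hσ]
  have hQ : 2 * ∑ σ ∈ S, j σ ^ 2 * P σ = ∑ σ ∈ S, j σ ^ 2 * μ σ :=
    two_mul_sum_mul_of_even hS fun σ => by rw [hj, neg_sq]
  have hT : 2 * ∑ σ ∈ S, tanh (σ / 2) * P σ = ∑ σ ∈ S, tanh (σ / 2) ^ 2 * μ σ := by
    rw [two_mul_sum_mul_of_odd hS htanh_odd]
    exact sum_congr rfl fun σ hσ => by rw [sq, mul_assoc, htanh σ hσ]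
  have hCS := sum_sq_le_sum_mul_sum_of_sq_le_mul S
    (fun σ hσ => mul_nonneg (sq_nonneg (j σ)) (hμ σ hσ))
    (fun σ hσ => mul_nonneg (sq_nonneg (tanh (σ / 2))) (hμ σ hσ))
    (fun σ _ => le_of_eq (by ring) :
      ∀ σ ∈ S, (j σ * tanh (σ / 2) * μ σ) ^ 2 ≤ j σ ^ 2 * μ σ * (tanh (σ / 2) ^ 2 * μ σ))
  rw [← hJ, ← hQ, ← hT] at hCS
  nlinarith [hCS]

theorem thermodynamic_uncertainty_theorem_general (S : Finset ℝ) (hSym : ∀ σ ∈ S, -σ ∈ S)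
    (P : ℝ → ℝ) (hP : ∀ σ ∈ S, 0 ≤ P σ)
    (hDFT : ∀ σ ∈ S, P (-σ) = Real.exp (-σ) * P σ)
    (j : ℝ → ℝ) (hodd : ∀ σ, j (-σ) = -j σ)
    (hj : ∑ σ ∈ S, j σ * P σ ≠ 0) :
    (∑ σ ∈ S, (j σ) ^ 2 * P σ) / (∑ σ ∈ S, j σ * P σ) ^ 2 - 1 ≥
      1 / (∑ σ ∈ S, Real.tanh (σ / 2) * P σ) - 1 := by
  have hCS := sq_sum_odd_mul_le_sum_sq_mul_mul_sum_tanh_half_mul hSym hP hDFT hodd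
  have hJ : 0 < (∑ σ ∈ S, j σ * P σ) ^ 2 := by positivity
  have hQ : 0 ≤ ∑ σ ∈ S, j σ ^ 2 * P σ :=
    sum_nonneg fun σ hσ => mul_nonneg (sq_nonneg (j σ)) (hP σ hσ)
  have hT : 0 < ∑ σ ∈ S, Real.tanh (σ / 2) * P σ := pos_of_mul_pos_right (hJ.trans_le hCS) hQ
  rw [ge_iff_le, sub_le_sub_iff_right, div_le_div_iff₀ hT hJ]
  linarith

theorem thermodynamic_uncertainty_theorem (S : Finset ℝ) (hSym : ∀ σ ∈ S, -σ ∈ S)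
    (P : ℝ → ℝ) (hP : ∀ σ ∈ S, 0 ≤ P σ) (hsum : ∑ σ ∈ S, P σ = 1)
    (hDFT : ∀ σ ∈ S, P (-σ) = Real.exp (-σ) * P σ)
    (htanh : 0 < ∑ σ ∈ S, Real.tanh (σ / 2) * P σ)
    (j : ℝ → ℝ) (hodd : ∀ σ, j (-σ) = -j σ)
    (hj : ∑ σ ∈ S, j σ * P σ ≠ 0) :
    (∑ σ ∈ S, (j σ) ^ 2 * P σ) / (∑ σ ∈ S, j σ * P σ) ^ 2 - 1 ≥
      1 / (∑ σ ∈ S, Real.tanh (σ / 2) * P σ) - 1 :=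
  thermodynamic_uncertainty_theorem_general S hSym P hP hDFT j hodd hj
end

section
/- For all x > 0, csch²(g(x/2)) > 2/(e^x − 1), where g is the inverse function of y ↦ y·tanh(y) on [0,∞); i.e., the Timpanaro–Guarnieri–Goold–Landi bound is strictly tighter than the Hasegawa–Van Vu bound. -/
/-! With `y = g (x / 2)` we have `x = 2 y tanh y` and `csch² y = 2 / (cosh 2y - 1)`, so the claim
is `log cosh 2y < 2 y tanh y` for `y > 0`. Both sides vanish at `0`, and the derivative of their
difference is `sech² y · (2y - tanh 2y) > 0`, because `tanh z < z` for `z > 0`. -/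

open Real Set

lemma pos_of_hasDerivAt_pos {f f' : ℝ → ℝ} (hf : ∀ x, HasDerivAt f (f' x) x) (h0 : f 0 = 0)
    (hf' : ∀ x, 0 < x → 0 < f' x) {x : ℝ} (hx : 0 < x) : 0 < f x := by
  have hmono : StrictMonoOn f (Ici 0) :=
    strictMonoOn_of_deriv_pos (convex_Ici 0) (fun y _ ↦ (hf y).continuousAt.continuousWithinAt)
      fun y hy ↦ by
        rw [interior_Ici] at hy
        exact (hf y).deriv ▸ hf' y hy
  simpa [h0] using hmono self_mem_Ici hx.le hx

namespace Real

lemma sinh_lt_mul_cosh {z : ℝ} (hz : 0 < z) : sinh z < z * cosh z := by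
  have hderiv (z : ℝ) : HasDerivAt (fun z ↦ z * cosh z - sinh z) (z * sinh z) z :=
    (((hasDerivAt_id z).mul (hasDerivAt_cosh z)).sub (hasDerivAt_sinh z)).congr_deriv (by simp)
  simpa using pos_of_hasDerivAt_pos hderiv (by simp)
    (fun z hz ↦ mul_pos hz (sinh_pos_iff.mpr hz)) hz

lemma hasDerivAt_two_mul_mul_tanh_sub_log_cosh_two_mul (y : ℝ) :
    HasDerivAt (fun y ↦ 2 * y * (sinh y / cosh y) - log (cosh (2 * y)))
      (2 * ((sinh y * cosh y + y) / cosh y ^ 2) - 2 * sinh (2 * y) / cosh (2 * y)) y := by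
  have h1 := ((hasDerivAt_id y).const_mul 2).mul
    ((hasDerivAt_sinh y).div (hasDerivAt_cosh y) (cosh_pos y).ne')
  have h2 := ((hasDerivAt_cosh (2 * y)).comp y ((hasDerivAt_id y).const_mul 2)).log
    (cosh_pos _).ne'
  refine (h1.sub h2).congr_deriv ?_
  simp only [Pi.div_apply, id, Function.comp]
  field_simp
  linear_combination y * cosh (2 * y) * cosh_sq y

lemma log_cosh_two_mul_lt {y : ℝ} (hy : 0 < y) : log (cosh (2 * y)) < 2 * y * tanh y := by
  rw [tanh_eq_sinh_div_cosh, ← sub_pos]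
  refine pos_of_hasDerivAt_pos hasDerivAt_two_mul_mul_tanh_sub_log_cosh_two_mul (by simp)
    (fun t ht ↦ ?_) hy
  have htanh := sinh_lt_mul_cosh (by positivity : 0 < 2 * t)
  rw [sinh_two_mul, cosh_two_mul] at htanh ⊢
  have hc := cosh_pos t
  have hderiv_eq : 2 * ((sinh t * cosh t + t) / cosh t ^ 2)
        - 2 * (2 * sinh t * cosh t) / (cosh t ^ 2 + sinh t ^ 2)
      = 2 * (t * (cosh t ^ 2 + sinh t ^ 2) - sinh t * cosh t)
        / (cosh t ^ 2 * (cosh t ^ 2 + sinh t ^ 2)) := by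
    field_simp
    linear_combination -(sinh t * cosh t) * cosh_sq t
  rw [hderiv_eq]
  exact div_pos (by linarith) (by positivity)

end Real

theorem tggl_gt_hvv (g : ℝ → ℝ)
    (hg : ∀ x : ℝ, 0 ≤ x → 0 ≤ g x ∧ g x * Real.tanh (g x) = x) :
    ∀ x : ℝ, 0 < x → (1 / Real.sinh (g (x / 2))) ^ 2 > 2 / (Real.exp x - 1) := by
  intro x hx
  obtain ⟨hy0, hyx⟩ := hg (x / 2) (by positivity)
  set y := g (x / 2)
  have hy : 0 < y := hy0.lt_of_ne fun h ↦ by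
    rw [← h, zero_mul] at hyx
    linarith
  have hcosh : cosh (2 * y) < exp x := by
    rw [← log_lt_iff_lt_exp (cosh_pos _)]
    linarith [log_cosh_two_mul_lt hy]
  rw [cosh_two_mul, cosh_sq] at hcosh
  have hsinh : 0 < sinh y := sinh_pos_iff.mpr hy
  rw [gt_iff_lt, div_pow, one_pow, div_lt_div_iff₀ (by linarith [pow_pos hsinh 2]) (by positivity)]
  linarith
end

section
/- For all x > 0, 2/x > csch²(g(x/2)), where g is the inverse of y ↦ y·tanh(y) on [0,∞); i.e., the Barato–Seifert bound function exceeds the TGGL bound function. -/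
/-! With `y = g (x / 2)` we have `x / 2 = y tanh y`, and `y tanh y < sinh² y` for `y > 0`
is `2y < sinh 2y` after clearing `sinh y / cosh y`. -/

open Real

lemma Real.mul_tanh_lt_sinh_sq {y : ℝ} (hy : 0 < y) : y * tanh y < sinh y ^ 2 := by
  have hsinh : 0 < sinh y := sinh_pos_iff.mpr hy
  have hdouble : 2 * y < 2 * sinh y * cosh y := by
    rw [← sinh_two_mul]
    exact self_lt_sinh_iff.mpr (by linarith)
  rw [tanh_eq_sinh_div_cosh, mul_div_assoc', div_lt_iff₀ (cosh_pos y)]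
  nlinarith

theorem bs_gt_tggl (g : ℝ → ℝ)
    (hg : ∀ x : ℝ, 0 ≤ x → 0 ≤ g x ∧ g x * Real.tanh (g x) = x) :
    ∀ x : ℝ, 0 < x → 2 / x > (1 / Real.sinh (g (x / 2))) ^ 2 := by
  intro x hx
  obtain ⟨hy_nonneg, hy_eq⟩ := hg (x / 2) (by linarith)
  have hy_pos : 0 < g (x / 2) := by
    refine hy_nonneg.lt_of_ne fun h => ?_
    rw [← h, zero_mul] at hy_eq
    linarith
  have hbound : x / 2 < sinh (g (x / 2)) ^ 2 := by
    simpa only [hy_eq] using mul_tanh_lt_sinh_sq hy_pos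
  rw [gt_iff_lt, one_div_pow, div_lt_div_iff₀ (by linarith) hx]
  linarith
end

section
/- Let z(σ) = tanh²(σ/2) and h(σ) = σ·tanh(σ/2) for σ ≥ 0. Then the composite function w = z ∘ h⁻¹ : [0,∞) → [0,1) is concave. -/
open Real Set

noncomputable def Hf (s : ℝ) : ℝ := 2 * s * Real.sinh s / Real.cosh s
noncomputable def Zf (s : ℝ) : ℝ := (Real.sinh s / Real.cosh s) ^ 2
noncomputable def Hd (s : ℝ) : ℝ := (2 * Real.sinh s * Real.cosh s + 2 * s) / Real.cosh s ^ 2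
noncomputable def Zd (s : ℝ) : ℝ := 2 * Real.sinh s / Real.cosh s ^ 3
noncomputable def psi (s : ℝ) : ℝ := Real.cosh s ^ 2 + s * Real.cosh s / Real.sinh s

lemma Hf_hasDeriv (s : ℝ) : HasDerivAt Hf (Hd s) s := by
  have h1 : HasDerivAt (fun x => 2 * x * Real.sinh x)
      (2 * Real.sinh s + 2 * s * Real.cosh s) s := by
    have := ((hasDerivAt_id s).const_mul 2).mul (Real.hasDerivAt_sinh s)
    refine this.congr_deriv (Eq.symm ?_)
    simp [id_eq]
  have h2 := h1.div (Real.hasDerivAt_cosh s) (Real.cosh_pos s).ne'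
  refine h2.congr_deriv (Eq.symm ?_)
  unfold Hd
  congr 1
  linear_combination (-2 * s) * Real.cosh_sq_sub_sinh_sq s

lemma Zf_hasDeriv (s : ℝ) : HasDerivAt Zf (Zd s) s := by
  have h1 := (Real.hasDerivAt_sinh s).div (Real.hasDerivAt_cosh s) (Real.cosh_pos s).ne'
  have h2 := h1.pow 2
  refine h2.congr_deriv (Eq.symm ?_)
  unfold Zd
  simp only [Pi.div_apply, Nat.cast_ofNat, show (2:ℕ) - 1 = 1 from rfl, pow_one]
  have hc := (Real.cosh_pos s).ne'
  have key := Real.cosh_sq_sub_sinh_sq s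
  field_simp
  linear_combination (-Real.sinh s) * key

lemma psi_strictMono : StrictMonoOn psi (Set.Ioi (0:ℝ)) := by
  have hcont : ContinuousOn psi (Set.Ioi (0:ℝ)) := by
    apply ContinuousOn.add
    · exact (Real.continuous_cosh.pow 2).continuousOn
    · exact ((continuous_id.mul Real.continuous_cosh).continuousOn).div
        Real.continuous_sinh.continuousOn
        (fun x hx => (Real.sinh_pos_iff.mpr hx).ne')
  apply strictMonoOn_of_deriv_pos (convex_Ioi 0) hcont
  intro x hx
  rw [interior_Ioi] at hx
  have hx0 : (0:ℝ) < x := hx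
  have hs : 0 < Real.sinh x := Real.sinh_pos_iff.mpr hx0
  have hc : 0 < Real.cosh x := Real.cosh_pos x
  have hD : HasDerivAt psi
      (2 * Real.cosh x ^ 1 * Real.sinh x +
        ((1 * Real.cosh x + x * Real.sinh x) * Real.sinh x - x * Real.cosh x * Real.cosh x)
          / Real.sinh x ^ 2) x := by
    have ha := (Real.hasDerivAt_cosh x).pow 2
    have hb := ((hasDerivAt_id x).mul (Real.hasDerivAt_cosh x)).div
      (Real.hasDerivAt_sinh x) hs.ne'
    exact ha.add hb
  rw [hD.deriv]
  have hnum : (1 * Real.cosh x + x * Real.sinh x) * Real.sinh x - x * Real.cosh x * Real.cosh x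
      = Real.cosh x * Real.sinh x - x := by
    linear_combination (-x) * Real.cosh_sq_sub_sinh_sq x
  rw [hnum]
  have h1 : x < Real.sinh x := Real.self_lt_sinh_iff.mpr hx0
  have h2 : 1 ≤ Real.cosh x := Real.one_le_cosh x
  have : 0 < Real.cosh x * Real.sinh x - x := by nlinarith
  positivity

lemma cross (p q : ℝ) (hp : 0 < p) (hpq : p < q) : Zd q * Hd p ≤ Zd p * Hd q := by
  have hq : 0 < q := hp.trans hpq
  have hψ : psi p ≤ psi q := (psi_strictMono hp hq hpq).le
  have sp := Real.sinh_pos_iff.mpr hp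
  have sq := Real.sinh_pos_iff.mpr hq
  have cp := Real.cosh_pos p
  have cq := Real.cosh_pos q
  unfold psi at hψ
  unfold Zd Hd
  rw [div_mul_div_comm, div_mul_div_comm, div_le_div_iff₀ (by positivity) (by positivity)]
  have key : Real.sinh q * Real.cosh p * (Real.sinh p * Real.cosh p + p)
      ≤ Real.sinh p * Real.cosh q * (Real.sinh q * Real.cosh q + q) := by
    have h1 : Real.cosh p ^ 2 + p * Real.cosh p / Real.sinh p
        = (Real.cosh p ^ 2 * Real.sinh p + p * Real.cosh p) / Real.sinh p := by
      field_simp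
    have h2 : Real.cosh q ^ 2 + q * Real.cosh q / Real.sinh q
        = (Real.cosh q ^ 2 * Real.sinh q + q * Real.cosh q) / Real.sinh q := by
      field_simp
    rw [h1, h2, div_le_div_iff₀ sp sq] at hψ
    nlinarith [hψ]
  nlinarith [mul_le_mul_of_nonneg_right key
    (by positivity : (0:ℝ) ≤ Real.cosh p ^ 2 * Real.cosh q ^ 2), sq_nonneg (Real.cosh p * Real.cosh q)]

lemma Hf_strictMono : StrictMonoOn Hf (Set.Ici (0:ℝ)) := by
  have hcont : ContinuousOn Hf (Set.Ici (0:ℝ)) := by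
    exact (((continuous_const.mul continuous_id).mul Real.continuous_sinh).div
      Real.continuous_cosh (fun x => (Real.cosh_pos x).ne')).continuousOn
  apply strictMonoOn_of_deriv_pos (convex_Ici 0) hcont
  intro x hx
  rw [interior_Ici] at hx
  have hx0 : (0:ℝ) < x := hx
  rw [(Hf_hasDeriv x).deriv]
  unfold Hd
  have hs : 0 < Real.sinh x := Real.sinh_pos_iff.mpr hx0
  have hc : 0 < Real.cosh x := Real.cosh_pos x
  positivity

lemma Hf_surj (x : ℝ) (hx : 0 ≤ x) : ∃ a, 0 ≤ a ∧ Hf a = x := by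
  set M : ℝ := max 1 x with hM
  have hM1 : (1:ℝ) ≤ M := le_max_left _ _
  have hMx : x ≤ M := le_max_right _ _
  have hM0 : (0:ℝ) ≤ M := by linarith
  have hHM : x ≤ Hf M := by
    have h2 : (2:ℝ) * Real.sinh M ≥ Real.cosh M := by
      have he : 2 * M + 1 ≤ Real.exp (2 * M) := by
        have := Real.add_one_le_exp (2 * M); linarith
      have hexp : Real.exp (2 * M) = Real.exp M * Real.exp M := by
        rw [← Real.exp_add]; ring_nf
      have hinv : Real.exp (-M) * Real.exp M = 1 := by
        rw [← Real.exp_add]; simp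
      have hep : 0 < Real.exp M := Real.exp_pos M
      rw [Real.sinh_eq, Real.cosh_eq]
      rw [hexp] at he
      nlinarith [Real.exp_pos (-M)]
    have : M ≤ Hf M := by
      unfold Hf
      rw [le_div_iff₀ (Real.cosh_pos M)]
      nlinarith [Real.cosh_pos M]
    linarith
  have hcont : ContinuousOn Hf (Set.Icc 0 M) :=
    (((continuous_const.mul continuous_id).mul Real.continuous_sinh).div
      Real.continuous_cosh (fun x => (Real.cosh_pos x).ne')).continuousOn
  have hsub := intermediate_value_Icc hM0 hcont
  have hx' : x ∈ Set.Icc (Hf 0) (Hf M) := by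
    constructor
    · simp [Hf, hx]
    · exact hHM
  obtain ⟨a, ha, haeq⟩ := hsub hx'
  exact ⟨a, ha.1, haeq⟩

theorem w_concave (w : ℝ → ℝ)
    (hw : ∀ σ : ℝ, 0 ≤ σ → w (σ * Real.tanh (σ / 2)) = (Real.tanh (σ / 2)) ^ 2) :
    ConcaveOn ℝ (Set.Ici (0 : ℝ)) w := by
  have wH : ∀ a : ℝ, 0 ≤ a → w (Hf a) = Zf a := by
    intro a ha
    have h := hw (2 * a) (by linarith)
    rw [show (2 * a) / 2 = a by ring, Real.tanh_eq_sinh_div_cosh] at h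
    rw [show Hf a = 2 * a * (Real.sinh a / Real.cosh a) by unfold Hf; ring]
    exact h
  rw [concaveOn_iff_slope_anti_adjacent]
  refine ⟨convex_Ici 0, ?_⟩
  intro x y z hx hz hxy hyz
  have hx0 : (0:ℝ) ≤ x := hx
  have hy0 : (0:ℝ) ≤ y := le_of_lt (lt_of_le_of_lt hx0 hxy)
  have hz0 : (0:ℝ) ≤ z := hz
  obtain ⟨a, ha0, hax⟩ := Hf_surj x hx0
  obtain ⟨b, hb0, hbx⟩ := Hf_surj y hy0
  obtain ⟨c, hc0, hcx⟩ := Hf_surj z hz0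
  have hab : a < b := by
    rw [← Hf_strictMono.lt_iff_lt ha0 hb0, hax, hbx]; exact hxy
  have hbc : b < c := by
    rw [← Hf_strictMono.lt_iff_lt hb0 hc0, hbx, hcx]; exact hyz
  -- MVT on [a,b]
  obtain ⟨ξ, hξmem, hξeq⟩ := exists_ratio_hasDerivAt_eq_ratio_slope Zf Zd hab
    (HasDerivAt.continuousOn (fun s _ => Zf_hasDeriv s))
    (fun s _ => Zf_hasDeriv s) Hf Hd
    (HasDerivAt.continuousOn (fun s _ => Hf_hasDeriv s))
    (fun s _ => Hf_hasDeriv s)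
  obtain ⟨η, hηmem, hηeq⟩ := exists_ratio_hasDerivAt_eq_ratio_slope Zf Zd hbc
    (HasDerivAt.continuousOn (fun s _ => Zf_hasDeriv s))
    (fun s _ => Zf_hasDeriv s) Hf Hd
    (HasDerivAt.continuousOn (fun s _ => Hf_hasDeriv s))
    (fun s _ => Hf_hasDeriv s)
  have hξ0 : 0 < ξ := lt_of_le_of_lt ha0 hξmem.1
  have hη0 : 0 < η := lt_of_le_of_lt hb0 hηmem.1
  have hξη : ξ < η := lt_trans hξmem.2 hηmem.1
  have Hdpos : ∀ s : ℝ, 0 < s → 0 < Hd s := by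
    intro s hs
    unfold Hd
    have h1 : 0 < Real.sinh s := Real.sinh_pos_iff.mpr hs
    have h2 : 0 < Real.cosh s := Real.cosh_pos s
    positivity
  have hd1 : 0 < Hf b - Hf a := sub_pos.mpr (Hf_strictMono ha0 hb0 hab)
  have hd2 : 0 < Hf c - Hf b := sub_pos.mpr (Hf_strictMono hb0 hc0 hbc)
  have slope1 : (Zf b - Zf a) / (Hf b - Hf a) = Zd ξ / Hd ξ := by
    rw [div_eq_div_iff hd1.ne' (Hdpos ξ hξ0).ne']
    linear_combination -hξeq
  have slope2 : (Zf c - Zf b) / (Hf c - Hf b) = Zd η / Hd η := by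
    rw [div_eq_div_iff hd2.ne' (Hdpos η hη0).ne']
    linear_combination -hηeq
  rw [← hax, ← hbx, ← hcx, wH a ha0, wH b hb0, wH c hc0, slope1, slope2]
  rw [div_le_div_iff₀ (Hdpos η hη0) (Hdpos ξ hξ0)]
  exact cross ξ η hξ0 hξη
end

section
/- If P(R(s), -Σ) = e^{-Σ}P(s, Σ) for a trajectory distribution with current J satisfying J(R(s)) = -J(s) and entropy Σ(R(s)) = -Σ(s), then the entropy-conditioned current j(σ) = E[J | Σ = σ] is odd: j(-σ) = -j(σ). -/
theorem entropy_conditioned_current_odd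
    (T : Type) [Fintype T] (R : T → T) (hR : Function.Involutive R)
    (P : T → ℝ) (hP : ∀ s, 0 ≤ P s) (hsum : ∑ s, P s = 1)
    (J Sig : T → ℝ)
    (hJ : ∀ s, J (R s) = -J s) (hSig : ∀ s, Sig (R s) = -Sig s)
    (hFT : ∀ s, P (R s) = Real.exp (-(Sig s)) * P s)
    (σ : ℝ)
    (hpos : 0 < ∑ s ∈ Finset.univ.filter (fun s => Sig s = σ), P s) :
    (∑ s ∈ Finset.univ.filter (fun s => Sig s = -σ), J s * P s) /
        (∑ s ∈ Finset.univ.filter (fun s => Sig s = -σ), P s) =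
      -((∑ s ∈ Finset.univ.filter (fun s => Sig s = σ), J s * P s) /
        (∑ s ∈ Finset.univ.filter (fun s => Sig s = σ), P s)) := by
  have key : ∀ f : T → ℝ, (∑ s ∈ Finset.univ.filter (fun s => Sig s = -σ), f s)
      = ∑ s ∈ Finset.univ.filter (fun s => Sig s = σ), f (R s) := by
    intro f
    refine Finset.sum_nbij' (fun s => R s) (fun s => R s) ?_ ?_ ?_ ?_ ?_
    · intro a ha
      simp only [Finset.mem_filter, Finset.mem_univ, true_and] at ha ⊢
      rw [hSig, ha, neg_neg]
    · intro a ha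
      simp only [Finset.mem_filter, Finset.mem_univ, true_and] at ha ⊢
      rw [hSig, ha]
    · intro a _; exact hR a
    · intro a _; exact hR a
    · intro a _; rw [hR a]
  have h1 : (∑ s ∈ Finset.univ.filter (fun s => Sig s = -σ), P s)
      = Real.exp (-σ) * ∑ s ∈ Finset.univ.filter (fun s => Sig s = σ), P s := by
    rw [key P, Finset.mul_sum]
    apply Finset.sum_congr rfl
    intro s hs
    simp only [Finset.mem_filter, Finset.mem_univ, true_and] at hs
    rw [hFT, hs]
  have h2 : (∑ s ∈ Finset.univ.filter (fun s => Sig s = -σ), J s * P s)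
      = Real.exp (-σ) * -(∑ s ∈ Finset.univ.filter (fun s => Sig s = σ), J s * P s) := by
    rw [key (fun s => J s * P s), ← Finset.sum_neg_distrib, Finset.mul_sum]
    apply Finset.sum_congr rfl
    intro s hs
    simp only [Finset.mem_filter, Finset.mem_univ, true_and] at hs
    rw [hJ, hFT, hs]
    ring
  rw [h1, h2, mul_div_mul_left _ _ (Real.exp_pos _).ne', neg_div]
end

section
/- For the two-level reset: let p_E = e^{-βE}/(1 + e^{-βE}) for E > 0, β > 0, and let the entropy production take value 2βE with probability (1−p_E)², value −2βE with probability p_E², and 0 with probability 2p_E(1−p_E). Then the mean entropy production is ⟨Σ⟩ = 2βE·tanh(βE/2), and ⟨tanh(Σ/2)⟩ = tanh(βE)·tanh(βE/2), so the minimum scaled variance is 1/(tanh(βE)·tanh(βE/2)) − 1. -/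
/-! The excitation probability `p` is a logistic function of `βE`, so `1 - 2p = tanh (βE / 2)`.
Both `Σ ↦ Σ` and `Σ ↦ tanh (Σ / 2)` are odd, and an odd observable `f` of the three-point law
averages to `f (2βE) ((1 - p)² - p²) = f (2βE) (1 - 2p)`. -/

open Real

noncomputable def excitedProb (x : ℝ) : ℝ := exp (-x) / (1 + exp (-x))

lemma one_sub_two_mul_excitedProb (x : ℝ) : 1 - 2 * excitedProb x = tanh (x / 2) := by
  have hsq : exp (-x) = exp (-(x / 2)) ^ 2 := by rw [← exp_nat_mul]; ring_nf
  have hinv : exp (x / 2) * exp (-(x / 2)) = 1 := by rw [← exp_add, add_neg_cancel, exp_zero]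
  rw [tanh_eq, excitedProb, hsq]
  field_simp
  linear_combination -2 * exp (-(x / 2)) * hinv

lemma threePoint_expectation_of_odd {f : ℝ → ℝ} (hf : f.Odd) (a p : ℝ) :
    f a * (1 - p) ^ 2 + f 0 * (2 * p * (1 - p)) + f (-a) * p ^ 2 = f a * (1 - 2 * p) := by
  rw [hf.map_zero, hf a]
  ring

lemma odd_tanh_half : Function.Odd fun s : ℝ => tanh (s / 2) := fun s => by
  simp only [neg_div, tanh_neg]

theorem two_level_reset_moments_general (E β : ℝ) :
    let p := Real.exp (-(β * E)) / (1 + Real.exp (-(β * E)))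
    ((2 * β * E) * (1 - p) ^ 2 + 0 * (2 * p * (1 - p)) + (-(2 * β * E)) * p ^ 2 =
      2 * β * E * Real.tanh (β * E / 2)) ∧
    (Real.tanh (2 * β * E / 2) * (1 - p) ^ 2 + Real.tanh (0 / 2) * (2 * p * (1 - p)) +
        Real.tanh (-(2 * β * E) / 2) * p ^ 2 = Real.tanh (β * E) * Real.tanh (β * E / 2)) ∧
    (1 / (Real.tanh (2 * β * E / 2) * (1 - p) ^ 2 + Real.tanh (0 / 2) * (2 * p * (1 - p)) +
        Real.tanh (-(2 * β * E) / 2) * p ^ 2) - 1 =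
      1 / (Real.tanh (β * E) * Real.tanh (β * E / 2)) - 1) := by
  intro p
  have hp : 1 - 2 * p = tanh (β * E / 2) := one_sub_two_mul_excitedProb (β * E)
  have hmean := threePoint_expectation_of_odd (f := id) (fun _ => rfl) (2 * β * E) p
  have htanh : _ = tanh (β * E) * tanh (β * E / 2) :=
    (threePoint_expectation_of_odd odd_tanh_half (2 * β * E) p).trans (by rw [hp]; ring_nf)
  rw [hp] at hmean
  exact ⟨hmean, htanh, by rw [htanh]⟩

theorem two_level_reset_moments (E β : ℝ) (hE : 0 < E) (hβ : 0 < β) :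
    let p := Real.exp (-(β * E)) / (1 + Real.exp (-(β * E)))
    ((2 * β * E) * (1 - p) ^ 2 + 0 * (2 * p * (1 - p)) + (-(2 * β * E)) * p ^ 2 =
      2 * β * E * Real.tanh (β * E / 2)) ∧
    (Real.tanh (2 * β * E / 2) * (1 - p) ^ 2 + Real.tanh (0 / 2) * (2 * p * (1 - p)) +
        Real.tanh (-(2 * β * E) / 2) * p ^ 2 = Real.tanh (β * E) * Real.tanh (β * E / 2)) ∧
    (1 / (Real.tanh (2 * β * E / 2) * (1 - p) ^ 2 + Real.tanh (0 / 2) * (2 * p * (1 - p)) +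
        Real.tanh (-(2 * β * E) / 2) * p ^ 2) - 1 =
      1 / (Real.tanh (β * E) * Real.tanh (β * E / 2)) - 1) :=
  two_level_reset_moments_general E β
end
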